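/- arXiv:2103.06154 — 3 statements merged into one kernel-verified Lean document; each statement's English description precedes it below -/
import Mathlib

section
/- For every integer m ≥ 1, let a_m denote the coefficient of X^m in the polynomial X · ∏_{k=1}^{m} (1 − X^{4k})² (1 − X^{8k})² ∈ ℤ[X] (the m-th Fourier coefficient of the eta product η(4z)²η(8z)²). Then a_m ≡ τ(m) (mod 2) for all m ≥ 1. -/
open Polynomial

/-- Ramanujan's tau function: `τ(n)` is the coefficient of `X^n` in
`X * ∏_{k=1}^{n} (1 - X^k)^24 ∈ ℤ[X]`. -/
noncomputable def ramanujanTau (n : ℕ) : ℤ :=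
  (X * ∏ k ∈ Finset.Icc 1 n, ((1 : ℤ[X]) - X ^ k) ^ 24).coeff n

/-! Modulo 2, Frobenius gives `(1 - X^k)^24 = (1 - X^k)^8 (1 - X^k)^16 = (1 - X^{8k})(1 - X^{16k})`,
and likewise `(1 - X^{4k})^2 (1 - X^{8k})^2 = (1 - X^{8k})(1 - X^{16k})`, so the two products
agree factor by factor over `ZMod 2`. -/

theorem Polynomial.one_sub_X_pow_pow_char_pow {R : Type*} [CommRing R] (p : ℕ) [Fact p.Prime]
    [CharP R p] (k n : ℕ) : ((1 : R[X]) - X ^ k) ^ p ^ n = 1 - X ^ (p ^ n * k) := by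
  rw [sub_pow_char_pow, one_pow, ← pow_mul, mul_comm]

theorem Polynomial.coeff_modEq_of_map_eq {n : ℕ} {f g : ℤ[X]}
    (h : f.map (Int.castRingHom (ZMod n)) = g.map (Int.castRingHom (ZMod n))) (m : ℕ) :
    f.coeff m ≡ g.coeff m [ZMOD n] := by
  rw [← ZMod.intCast_eq_intCast_iff]
  simpa only [coeff_map, eq_intCast] using congrArg (coeff · m) h

theorem one_sub_X_pow_four_mul_sq_mul_eight_mul_sq_eq_pow_24_zmod_two (k : ℕ) :
    ((1 : (ZMod 2)[X]) - X ^ (4 * k)) ^ 2 * (1 - X ^ (8 * k)) ^ 2 = (1 - X ^ k) ^ 24 := by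
  have frob := one_sub_X_pow_pow_char_pow (R := ZMod 2) 2
  have h4 := frob (4 * k) 1
  have h8 := frob (8 * k) 1
  have h3 := frob k 3
  have h4' := frob k 4
  norm_num [← mul_assoc] at h4 h8 h3 h4'
  calc ((1 : (ZMod 2)[X]) - X ^ (4 * k)) ^ 2 * (1 - X ^ (8 * k)) ^ 2
      = (1 - X ^ (8 * k)) * (1 - X ^ (16 * k)) := by rw [h4, h8]
    _ = (1 - X ^ k) ^ 8 * (1 - X ^ k) ^ 16 := by rw [h3, h4']
    _ = (1 - X ^ k) ^ 24 := by ring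

theorem f32_coeff_congr_tau_mod_two_general (m : ℕ) :
    (X * ∏ k ∈ Finset.Icc 1 m,
        ((1 : ℤ[X]) - X ^ (4 * k)) ^ 2 * ((1 : ℤ[X]) - X ^ (8 * k)) ^ 2).coeff m ≡
      ramanujanTau m [ZMOD 2] := by
  refine coeff_modEq_of_map_eq ?_ m
  simp only [Polynomial.map_mul, Polynomial.map_prod, Polynomial.map_pow, Polynomial.map_sub,
    Polynomial.map_one, Polynomial.map_X]
  exact congrArg (X * ·) <| Finset.prod_congr rfl fun k _ =>
    one_sub_X_pow_four_mul_sq_mul_eight_mul_sq_eq_pow_24_zmod_two k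

theorem f32_coeff_congr_tau_mod_two (m : ℕ) (hm : 1 ≤ m) :
    (X * ∏ k ∈ Finset.Icc 1 m,
        ((1 : ℤ[X]) - X ^ (4 * k)) ^ 2 * ((1 : ℤ[X]) - X ^ (8 * k)) ^ 2).coeff m ≡
      ramanujanTau m [ZMOD 2] :=
  f32_coeff_congr_tau_mod_two_general m
end

section
/- Let p be a prime, n ≥ 0 an integer, and let ω_n := (1 + X)^{p^n} − 1 ∈ ℤ_p[X]. Let H ∈ ℤ_p[X] be nonzero and set F := H · ω_n. Then λ(F) = λ(H) + p^n, where for a nonzero polynomial G ∈ ℤ_p[X], λ(G) denotes the least index i such that ‖G.coeff i‖ equals the maximum of the p-adic norms of the coefficients of G. -/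
open Polynomial

/-- The Iwasawa `λ`-invariant of a polynomial over `ℤ_p`: the least index `i` such that
the `p`-adic norm of the `i`-th coefficient equals the maximum of the `p`-adic norms of the
coefficients (equivalently, the least index whose coefficient has minimal `p`-adic valuation). -/
noncomputable def lambdaInvariant {p : ℕ} [Fact p.Prime] (G : Polynomial (PadicInt p)) : ℕ :=
  sInf {i | ‖G.coeff i‖ = ⨆ j, ‖G.coeff j‖}

/-! The `λ`-invariant is additive: if `a = λ(F)` and `b = λ(G)`, then in the coefficient of `X^(a+b)`
of `F * G` the term `F.coeff a * G.coeff b` strictly dominates all the others, while every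
coefficient of lower degree consists of dominated terms only; by the ultrametric inequality this
makes `a + b` the first index at which `F * G` attains its maximal coefficient norm.
Moreover `λ(ω_n) = p^n`, because `ω_n` is monic of degree `p^n` and `p` divides all binomial
coefficients `(p^n).choose j` with `0 < j < p^n`. -/

theorem IsUltrametricDist.norm_sum_lt_of_forall_lt {M ι : Type*} [SeminormedAddCommGroup M]
    [IsUltrametricDist M] {s : Finset ι} {f : ι → M} {C : ℝ} (hC : 0 < C)
    (h : ∀ i ∈ s, ‖f i‖ < C) : ‖∑ i ∈ s, f i‖ < C := by
  rcases s.eq_empty_or_nonempty with rfl | hs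
  · simpa using hC
  · obtain ⟨i, hi, hle⟩ := exists_norm_finsetSum_le_of_nonempty hs f
    exact hle.trans_lt (h i hi)

theorem Polynomial.exists_forall_norm_coeff_le {R : Type*} [SeminormedRing R] (G : R[X]) :
    ∃ i, ∀ j, ‖G.coeff j‖ ≤ ‖G.coeff i‖ := by
  obtain ⟨i, -, hi⟩ := (Finset.range (G.natDegree + 1)).exists_max_image (‖G.coeff ·‖)
    ⟨0, by simp⟩
  refine ⟨i, fun j => ?_⟩
  rcases le_or_gt j G.natDegree with hj | hj
  · exact hi j (by simpa [Nat.lt_succ_iff] using hj)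
  · simp [coeff_eq_zero_of_natDegree_lt hj]

theorem Polynomial.coeff_one_add_X_pow_sub_one {R : Type*} [Ring R] (N k : ℕ) :
    (((1 : R[X]) + X) ^ N - 1).coeff k = if k = 0 then 0 else (N.choose k : R) := by
  rcases eq_or_ne k 0 with rfl | hk
  · simp [coeff_one_add_X_pow]
  · simp [coeff_one_add_X_pow, coeff_one, hk]

theorem Polynomial.coeff_one_add_X_pow_sub_one_self {R : Type*} [Ring R] {N : ℕ} (hN : N ≠ 0) :
    (((1 : R[X]) + X) ^ N - 1).coeff N = 1 := by
  rw [coeff_one_add_X_pow_sub_one, if_neg hN, Nat.choose_self, Nat.cast_one]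

theorem Polynomial.one_add_X_pow_sub_one_ne_zero {R : Type*} [Ring R] [Nontrivial R] {N : ℕ}
    (hN : N ≠ 0) : ((1 : R[X]) + X) ^ N - 1 ≠ 0 := fun h => by
  simpa [h] using coeff_one_add_X_pow_sub_one_self (R := R) hN

section LambdaInvariant

open Finset.HasAntidiagonal

variable {p : ℕ} [Fact p.Prime]

theorem isLeast_lambdaInvariant (G : ℤ_[p][X]) :
    IsLeast {i | ∀ j, ‖G.coeff j‖ ≤ ‖G.coeff i‖} (lambdaInvariant G) := by
  obtain ⟨i₀, hi₀⟩ := G.exists_forall_norm_coeff_le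
  have hsup : ⨆ j, ‖G.coeff j‖ = ‖G.coeff i₀‖ :=
    ciSup_eq_of_forall_le_of_forall_lt_exists_gt hi₀ fun _ hw => ⟨i₀, hw⟩
  have hset : {i | ‖G.coeff i‖ = ⨆ j, ‖G.coeff j‖} = {i | ∀ j, ‖G.coeff j‖ ≤ ‖G.coeff i‖} := by
    ext i
    rw [Set.mem_ofPred_eq, Set.mem_ofPred_eq, hsup]
    exact ⟨fun h j => h ▸ hi₀ j, fun h => le_antisymm (hi₀ i) (h i₀)⟩
  rw [lambdaInvariant, hset]
  exact ⟨Nat.sInf_mem ⟨i₀, hi₀⟩, fun _ => Nat.sInf_le⟩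

theorem norm_coeff_le_norm_coeff_lambdaInvariant (G : ℤ_[p][X]) (j : ℕ) :
    ‖G.coeff j‖ ≤ ‖G.coeff (lambdaInvariant G)‖ :=
  (isLeast_lambdaInvariant G).1 j

theorem norm_coeff_lt_of_lt_lambdaInvariant {G : ℤ_[p][X]} {i : ℕ} (hi : i < lambdaInvariant G) :
    ‖G.coeff i‖ < ‖G.coeff (lambdaInvariant G)‖ := by
  by_contra! h
  exact hi.not_ge <| (isLeast_lambdaInvariant G).2
    fun j => (norm_coeff_le_norm_coeff_lambdaInvariant G j).trans h

theorem norm_coeff_lambdaInvariant_pos {G : ℤ_[p][X]} (hG : G ≠ 0) :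
    0 < ‖G.coeff (lambdaInvariant G)‖ := by
  obtain ⟨i, hi⟩ := support_nonempty.mpr hG
  exact (norm_pos_iff.mpr (mem_support_iff.mp hi)).trans_le
    (norm_coeff_le_norm_coeff_lambdaInvariant G i)

theorem lambdaInvariant_eq_of_forall {G : ℤ_[p][X]} {l : ℕ}
    (hle : ∀ j, ‖G.coeff j‖ ≤ ‖G.coeff l‖) (hlt : ∀ i < l, ‖G.coeff i‖ < ‖G.coeff l‖) :
    lambdaInvariant G = l :=
  (isLeast_lambdaInvariant G).unique ⟨hle, fun _ hi => not_lt.mp fun h => (hlt _ h).not_ge (hi l)⟩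

theorem norm_coeff_mul_coeff_le (F G : ℤ_[p][X]) (i j : ℕ) :
    ‖F.coeff i * G.coeff j‖ ≤ ‖F.coeff (lambdaInvariant F)‖ * ‖G.coeff (lambdaInvariant G)‖ := by
  rw [norm_mul]
  exact mul_le_mul (norm_coeff_le_norm_coeff_lambdaInvariant F i)
    (norm_coeff_le_norm_coeff_lambdaInvariant G j) (norm_nonneg _) (norm_nonneg _)

theorem norm_coeff_mul_coeff_lt {F G : ℤ_[p][X]} (hF : F ≠ 0) (hG : G ≠ 0) {i j : ℕ}
    (hij : i < lambdaInvariant F ∨ j < lambdaInvariant G) :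
    ‖F.coeff i * G.coeff j‖ < ‖F.coeff (lambdaInvariant F)‖ * ‖G.coeff (lambdaInvariant G)‖ := by
  rw [norm_mul]
  rcases hij with hi | hj
  · exact mul_lt_mul_of_lt_of_le_of_nonneg_of_pos (norm_coeff_lt_of_lt_lambdaInvariant hi)
      (norm_coeff_le_norm_coeff_lambdaInvariant G j) (norm_nonneg _)
      (norm_coeff_lambdaInvariant_pos hG)
  · exact mul_lt_mul_of_le_of_lt_of_nonneg_of_pos (norm_coeff_le_norm_coeff_lambdaInvariant F i)
      (norm_coeff_lt_of_lt_lambdaInvariant hj) (norm_nonneg _)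
      (norm_coeff_lambdaInvariant_pos hF)

theorem lambdaInvariant_mul {F G : ℤ_[p][X]} (hF : F ≠ 0) (hG : G ≠ 0) :
    lambdaInvariant (F * G) = lambdaInvariant F + lambdaInvariant G := by
  set a := lambdaInvariant F
  set b := lambdaInvariant G
  have hpos : 0 < ‖F.coeff a‖ * ‖G.coeff b‖ :=
    mul_pos (norm_coeff_lambdaInvariant_pos hF) (norm_coeff_lambdaInvariant_pos hG)
  have hle (k : ℕ) : ‖(F * G).coeff k‖ ≤ ‖F.coeff a‖ * ‖G.coeff b‖ := by
    rw [coeff_mul]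
    exact IsUltrametricDist.norm_sum_le_of_forall_le_of_nonneg hpos.le
      fun x _ => norm_coeff_mul_coeff_le F G x.1 x.2
  have hlt (k : ℕ) (hk : k < a + b) : ‖(F * G).coeff k‖ < ‖F.coeff a‖ * ‖G.coeff b‖ := by
    rw [coeff_mul]
    refine IsUltrametricDist.norm_sum_lt_of_forall_lt hpos fun x hx => ?_
    rw [mem_antidiagonal] at hx
    exact norm_coeff_mul_coeff_lt hF hG (by omega)
  have hmem : (a, b) ∈ antidiagonal (a + b) := mem_antidiagonal.mpr rfl
  have hrest : ‖∑ x ∈ (antidiagonal (a + b)).erase (a, b), F.coeff x.1 * G.coeff x.2‖ <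
      ‖F.coeff a‖ * ‖G.coeff b‖ := by
    refine IsUltrametricDist.norm_sum_lt_of_forall_lt hpos fun x hx => ?_
    obtain ⟨hne, hx⟩ := Finset.mem_erase.mp hx
    rw [mem_antidiagonal] at hx
    refine norm_coeff_mul_coeff_lt hF hG (by_contra fun h => hne (Prod.ext ?_ ?_)) <;> omega
  have hat : ‖(F * G).coeff (a + b)‖ = ‖F.coeff a‖ * ‖G.coeff b‖ := by
    rw [coeff_mul, ← Finset.add_sum_erase _ _ hmem,
      IsUltrametricDist.norm_add_eq_max_of_norm_ne_norm (by rw [norm_mul]; exact hrest.ne'),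
      norm_mul, max_eq_left hrest.le]
  exact lambdaInvariant_eq_of_forall (fun j => hat ▸ hle j) fun i hi => hat ▸ hlt i hi

theorem lambdaInvariant_one_add_X_pow_prime_pow_sub_one (n : ℕ) :
    lambdaInvariant (((1 : ℤ_[p][X]) + X) ^ p ^ n - 1) = p ^ n := by
  have hp : p.Prime := Fact.out
  have htop : (((1 : ℤ_[p][X]) + X) ^ p ^ n - 1).coeff (p ^ n) = 1 :=
    coeff_one_add_X_pow_sub_one_self (pow_ne_zero n hp.ne_zero)
  refine lambdaInvariant_eq_of_forall (fun j => ?_) fun i hi => ?_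
  · rw [htop, norm_one]
    exact PadicInt.norm_le_one _
  rw [htop, norm_one, coeff_one_add_X_pow_sub_one]
  split_ifs with hi0
  · simp
  · exact PadicInt.norm_natCast_lt_one_iff.mpr (hp.dvd_choose_pow hi0 hi.ne)

end LambdaInvariant

theorem lambda_invariant_mul_omega (p : ℕ) [Fact p.Prime] (n : ℕ)
    (H : Polynomial (PadicInt p)) (hH : H ≠ 0) :
    lambdaInvariant (H * (((1 : Polynomial (PadicInt p)) + X) ^ p ^ n - 1)) =
      lambdaInvariant H + p ^ n := by
  have hω : ((1 : Polynomial (PadicInt p)) + X) ^ p ^ n - 1 ≠ 0 :=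
    one_add_X_pow_sub_one_ne_zero (pow_ne_zero n (Fact.out : p.Prime).ne_zero)
  rw [lambdaInvariant_mul hH hω, lambdaInvariant_one_add_X_pow_prime_pow_sub_one]
end

section
/- Let p be a prime and n ≥ 0 an integer. Let F ∈ ℤ_p[X] be a nonzero polynomial divisible by ω_n := (1 + X)^{p^n} − 1. Then λ(F) ≥ p^n; that is, for every index i < p^n, the p-adic norm ‖F.coeff i‖ is strictly smaller than the maximum of the p-adic norms of the coefficients of F. -/
/-!
By Frobenius, `(1 + X) ^ p ^ n ≡ 1 + X ^ p ^ n (mod p)`, so `ω_n = X ^ p ^ n - e` with every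
coefficient of `e` of norm `< 1`. Write `|·|` for the Gauss norm (largest coefficient norm), which is
multiplicative and ultrametric. For `F = ω_n * G` this gives `|e * G| < |G| = |X ^ p ^ n * G|`, hence
`|F| ≥ |G| > |e * G|`; below degree `p ^ n` the coefficients of `F` are those of `-e * G`, so their
norms stay below `|F|`.
-/

open Polynomial

namespace Polynomial

theorem iSup_coeff_eq_gaussNorm {R F : Type*} [Semiring R] [FunLike F R ℝ] [ZeroHomClass F R ℝ]
    [NonnegHomClass F R ℝ] (v : F) (f : R[X]) : ⨆ i, v (f.coeff i) = f.gaussNorm v 1 := by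
  rw [← gaussNorm_coe_powerSeries v f zero_le_one, PowerSeries.gaussNorm_eq]
  simp

theorem gaussNorm_lt_of_forall_lt {R F : Type*} [Semiring R] [FunLike F R ℝ] (v : F) {c r : ℝ}
    {f : R[X]} (hr : 0 < r) (h : ∀ i, v (f.coeff i) * c ^ i < r) : f.gaussNorm v c < r := by
  unfold gaussNorm
  split_ifs
  · exact (Finset.sup'_lt_iff _).2 fun i _ ↦ h i
  · exact hr

section Nonarchimedean

variable {R : Type*} [Ring R] [Nontrivial R] {v : AbsoluteValue R ℝ} (hna : IsNonarchimedean v)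
include hna

theorem gaussNorm_X_pow_mul (m : ℕ) (f : R[X]) :
    (X ^ m * f).gaussNorm v 1 = f.gaussNorm v 1 := by
  rw [gaussNorm_mul hna one_pos, X_pow_eq_monomial, gaussNorm_monomial]
  simp

theorem apply_coeff_lt_gaussNorm_mul {q f : R[X]} {m i : ℕ}
    (hq : (X ^ m - q).gaussNorm v 1 < 1) (hf : f ≠ 0) (hi : i < m) :
    v ((q * f).coeff i) < (q * f).gaussNorm v 1 := by
  have hf_pos : 0 < f.gaussNorm v 1 :=
    (gaussNorm_nonneg v f zero_le_one).lt_of_ne' <|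
      (gaussNorm_eq_zero_iff v f (fun _ ↦ v.eq_zero.1) one_pos).not.2 hf
  have herr : ((X ^ m - q) * f).gaussNorm v 1 < f.gaussNorm v 1 := by
    rw [gaussNorm_mul hna one_pos]
    exact mul_lt_of_lt_one_left hf_pos hq
  have hlow : f.gaussNorm v 1 ≤ (q * f).gaussNorm v 1 := by
    have hsplit : q * f + (X ^ m - q) * f = X ^ m * f := by
      rw [← add_mul, add_sub_cancel]
    have := isNonarchimedean_gaussNorm v hna zero_le_one (q * f) ((X ^ m - q) * f)
    rw [hsplit, gaussNorm_X_pow_mul hna] at this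
    exact (le_max_iff.1 this).resolve_right herr.not_ge
  have hcoeff : v ((q * f).coeff i) = v (((X ^ m - q) * f).coeff i) := by
    rw [sub_mul, coeff_sub, coeff_X_pow_mul', if_neg hi.not_ge, zero_sub, map_neg_eq_map]
  calc v ((q * f).coeff i) = v (((X ^ m - q) * f).coeff i) := hcoeff
    _ ≤ ((X ^ m - q) * f).gaussNorm v 1 := by
      simpa using le_gaussNorm v ((X ^ m - q) * f) zero_le_one i
    _ < f.gaussNorm v 1 := herr
    _ ≤ (q * f).gaussNorm v 1 := hlow

end Nonarchimedean

end Polynomial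

namespace PadicInt

variable {p : ℕ} [Fact p.Prime]

theorem norm_coeff_X_pow_sub_one_add_X_pow_sub_one_lt_one (n i : ℕ) :
    ‖(X ^ p ^ n - ((1 + X) ^ p ^ n - 1) : ℤ_[p][X]).coeff i‖ < 1 := by
  have hmap : (X ^ p ^ n - ((1 + X) ^ p ^ n - 1) : ℤ_[p][X]).map toZMod = 0 := by
    simp [Polynomial.map_sub, add_pow_char_pow]
  rw [← mem_nonunits, ← IsLocalRing.mem_maximalIdeal, ← ker_toZMod, RingHom.mem_ker, ← coeff_map,
    hmap, coeff_zero]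

end PadicInt

theorem lambda_invariant_ge_of_omega_dvd (p : ℕ) [Fact p.Prime] (n : ℕ)
    (F : Polynomial (PadicInt p)) (hF : F ≠ 0)
    (hdvd : (((1 : Polynomial (PadicInt p)) + X) ^ p ^ n - 1) ∣ F) :
    p ^ n ≤ sInf {i | ‖F.coeff i‖ = ⨆ j, ‖F.coeff j‖} ∧
      ∀ i < p ^ n, ‖F.coeff i‖ < ⨆ j, ‖F.coeff j‖ := by
  obtain ⟨G, rfl⟩ := hdvd
  set ω : ℤ_[p][X] := (1 + X) ^ p ^ n - 1
  set v := IsAbsoluteValue.toAbsoluteValue (norm : ℤ_[p] → ℝ)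
  have hna : IsNonarchimedean v := IsUltrametricDist.isNonarchimedean_norm
  have hsup : ⨆ j, ‖(ω * G).coeff j‖ = (ω * G).gaussNorm v 1 := iSup_coeff_eq_gaussNorm v _
  have hω : (X ^ p ^ n - ω).gaussNorm v 1 < 1 :=
    gaussNorm_lt_of_forall_lt v one_pos fun i ↦ by
      rw [one_pow, mul_one]
      exact PadicInt.norm_coeff_X_pow_sub_one_add_X_pow_sub_one_lt_one (p := p) n i
  have hlt : ∀ i < p ^ n, ‖(ω * G).coeff i‖ < ⨆ j, ‖(ω * G).coeff j‖ := fun i hi ↦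
    hsup ▸ apply_coeff_lt_gaussNorm_mul hna hω (right_ne_zero_of_mul hF) hi
  obtain ⟨k, hk⟩ := exists_eq_gaussNorm v 1 (ω * G)
  refine ⟨le_csInf ⟨k, ?_⟩ fun i hi ↦ not_lt.1 fun h ↦ (hlt i h).ne hi, hlt⟩
  simpa [hsup, v] using hk.symm
end
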